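/- arXiv:1810.09175 — 5 statements merged into one kernel-verified Lean document; each statement's English description precedes it below -/
import Mathlib

section
/- Let p > 2 be a prime number. Then there are infinitely many clones on Z_p × Z_p which contain the componentwise addition ⊕ and which are not finitely generated, i.e., infinitely many pairwise distinct clones C containing ⊕ such that C is not the smallest clone containing any finite set of operations. -/
/-- A finitary operation on `A`: an element of arity `n + 1` (so every arity is `≥ 1`). -/
abbrev Ops (A : Type) := Σ n : ℕ, ((Fin (n + 1) → A) → A)

/-- The product `E·F` of two sets of finitary operations:
all compositions `f ∘ (g₁, …, gₙ)` with `f ∈ E` and all `gᵢ ∈ F` of a common arity. -/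
def OpProd {A : Type} (E F : Set (Ops A)) : Set (Ops A) :=
  { h | ∃ (n m : ℕ) (f : (Fin (n + 1) → A) → A) (g : Fin (n + 1) → (Fin (m + 1) → A) → A),
      (⟨n, f⟩ : Ops A) ∈ E ∧ (∀ i, (⟨m, g i⟩ : Ops A) ∈ F) ∧
      h = ⟨m, fun x => f (fun i => g i x)⟩ }

/-- The set `Lin(Z_p)` of linear operations `(x₁, …, xₙ) ↦ Σ aᵢ xᵢ` on `ZMod p`. -/
def LinOps (p : ℕ) : Set (Ops (ZMod p)) :=
  { h | ∃ (n : ℕ) (a : Fin (n + 1) → ZMod p), h = ⟨n, fun x => ∑ i, a i * x i⟩ }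

/-- A linearly closed clonoid on `ZMod p`. -/
def IsLCC (p : ℕ) (C : Set (Ops (ZMod p))) : Prop :=
  C.Nonempty ∧ OpProd (LinOps p) C ⊆ C ∧ OpProd C (LinOps p) ⊆ C

/-- The sum `D₁ + D₂` of two sets of operations on `ZMod p`. -/
def LCCsum (p : ℕ) (D₁ D₂ : Set (Ops (ZMod p))) : Set (Ops (ZMod p)) :=
  { h | ∃ (n : ℕ) (f g : (Fin (n + 1) → ZMod p) → ZMod p),
      (⟨n, f⟩ : Ops (ZMod p)) ∈ D₁ ∧ (⟨n, g⟩ : Ops (ZMod p)) ∈ D₂ ∧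
      h = ⟨n, fun x => f x + g x⟩ }

/-- The linearly closed clonoid on `ZMod p` generated by a set `F` of operations. -/
def genLC (p : ℕ) (F : Set (Ops (ZMod p))) : Set (Ops (ZMod p)) :=
  ⋂₀ { C | IsLCC p C ∧ F ⊆ C }

/-- A finitely generated linearly closed clonoid on `ZMod p`. -/
def FinGenLCC (p : ℕ) (C : Set (Ops (ZMod p))) : Prop :=
  ∃ F : Set (Ops (ZMod p)), F.Finite ∧ C = genLC p F

/-- A `p`-minor subset of `ℕ`. -/
def IsPMinor (p : ℕ) (M : Set ℕ) : Prop :=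
  ∀ n ∈ M, n > p - 1 → n - (p - 1) ∈ M

/-- A reduced polynomial: every variable exponent is at most `p - 1`. -/
def IsReducedPoly (p : ℕ) (f : MvPolynomial ℕ (ZMod p)) : Prop :=
  ∀ d ∈ f.support, ∀ i, d i ≤ p - 1

/-- The `(n+1)`-ary operation on `ZMod p` induced by a polynomial
(meaningful when all variables of `f` have index `< n + 1`). -/
noncomputable def inducedOp (p n : ℕ) (f : MvPolynomial ℕ (ZMod p)) : (Fin (n + 1) → ZMod p) → ZMod p :=
  fun x => MvPolynomial.eval (fun i => if h : i < n + 1 then x ⟨i, h⟩ else 0) f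

/-- `𝒞(M)`: all constant-zero operations together with all operations induced by a nonzero
reduced polynomial each of whose monomials has total degree in `M`. -/
def CM (p : ℕ) (M : Set ℕ) : Set (Ops (ZMod p)) :=
  { h | ∃ n : ℕ, h = ⟨n, fun _ => 0⟩ } ∪
  { h | ∃ (n : ℕ) (f : MvPolynomial ℕ (ZMod p)), f ≠ 0 ∧ IsReducedPoly p f ∧
      (∀ i ∈ f.vars, i < n + 1) ∧ (∀ d ∈ f.support, (d.sum fun _ e => e) ∈ M) ∧
      h = ⟨n, inducedOp p n f⟩ }

/-- `𝒫(M)`: polynomials each of whose monomials has total degree in `M` (this includes `0`). -/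
def PM (p : ℕ) (M : Set ℕ) : Set (MvPolynomial ℕ (ZMod p)) :=
  { f | ∀ d ∈ f.support, (d.sum fun _ e => e) ∈ M }

/-- The set `L` of linear polynomials `Σ aᵢ xᵢ`. -/
def LinPoly (p : ℕ) : Set (MvPolynomial ℕ (ZMod p)) :=
  { f | ∃ (s : Finset ℕ) (a : ℕ → ZMod p),
      f = ∑ i ∈ s, MvPolynomial.C (a i) * MvPolynomial.X i }

/-- The product `A·B` of two sets of polynomials: substitute members of `B` for the
variables of a member of `A` (regarded as `n`-ary). -/
def PolyProd (p : ℕ) (A B : Set (MvPolynomial ℕ (ZMod p))) :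
    Set (MvPolynomial ℕ (ZMod p)) :=
  { h | ∃ (n : ℕ) (f : MvPolynomial ℕ (ZMod p)) (g : ℕ → MvPolynomial ℕ (ZMod p)),
      f ∈ A ∧ (∀ i ∈ f.vars, i < n) ∧ (∀ i < n, g i ∈ B) ∧ h = MvPolynomial.aeval g f }

/-- A polynomial linearly closed clonoid. -/
def IsPLC (p : ℕ) (C : Set (MvPolynomial ℕ (ZMod p))) : Prop :=
  C.Nonempty ∧ PolyProd p (LinPoly p) C ⊆ C ∧ PolyProd p C (LinPoly p) ⊆ C

/-- The polynomial linearly closed clonoid generated by `F`. -/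
def genPLC (p : ℕ) (F : Set (MvPolynomial ℕ (ZMod p))) : Set (MvPolynomial ℕ (ZMod p)) :=
  ⋂₀ { C | IsPLC p C ∧ F ⊆ C }

/-- A clone on `A`: contains all projections and is closed under composition. -/
def IsClone {A : Type} (C : Set (Ops A)) : Prop :=
  (∀ (n : ℕ) (j : Fin (n + 1)), (⟨n, fun x => x j⟩ : Ops A) ∈ C) ∧ OpProd C C ⊆ C

/-- The clone generated by a set of operations. -/
def cloneGen {A : Type} (F : Set (Ops A)) : Set (Ops A) :=
  ⋂₀ { C | IsClone C ∧ F ⊆ C }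

/-- A finitely generated clone. -/
def FinGenClone {A : Type} (C : Set (Ops A)) : Prop :=
  ∃ F : Set (Ops A), F.Finite ∧ C = cloneGen F

/-- The binary addition operation, as a finitary operation. -/
def plusOp (A : Type) [Add A] : Ops A := ⟨1, fun x => x 0 + x 1⟩

/-- The set of all projections. -/
def ProjOps (A : Type) : Set (Ops A) :=
  { h | ∃ (n : ℕ) (j : Fin (n + 1)), h = ⟨n, fun x => x j⟩ }

/-- A linearly closed iterative algebra on `ZMod p`. -/
def IsLCIA (p : ℕ) (C : Set (Ops (ZMod p))) : Prop :=
  IsLCC p C ∧ OpProd C (C ∪ ProjOps (ZMod p)) ⊆ C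

/-- The clone `Aff(Z_p)` of affine operations `(x₁, …, xₙ) ↦ c + Σ aᵢ xᵢ`. -/
def AffOps (p : ℕ) : Set (Ops (ZMod p)) :=
  { h | ∃ (n : ℕ) (c : ZMod p) (a : Fin (n + 1) → ZMod p),
      h = ⟨n, fun x => c + ∑ i, a i * x i⟩ }

/-- An operation preserves an automorphism `π` of `(ZMod p, +)`. -/
def PreservesAut {p : ℕ} (h : Ops (ZMod p)) (π : AddAut (ZMod p)) : Prop :=
  ∀ x : Fin (h.1 + 1) → ZMod p, h.2 (fun i => π (x i)) = π (h.2 x)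

/-- An operation preserves the unary relation `{0}`. -/
def Preserves0 {p : ℕ} (h : Ops (ZMod p)) : Prop :=
  h.2 (fun _ => 0) = 0

/-- The embedding `φ` of linearly closed clonoids on `ZMod p` into sets of operations
on `ZMod p × ZMod p`. -/
def phiMap (p : ℕ) (C : Set (Ops (ZMod p))) : Set (Ops (ZMod p × ZMod p)) :=
  { h | ∃ (n : ℕ) (l₁ l₂ f : (Fin (n + 1) → ZMod p) → ZMod p),
      (⟨n, l₁⟩ : Ops (ZMod p)) ∈ LinOps p ∧ (⟨n, l₂⟩ : Ops (ZMod p)) ∈ LinOps p ∧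
      (⟨n, f⟩ : Ops (ZMod p)) ∈ C ∧
      h = ⟨n, fun x => (l₁ (fun i => (x i).1) + f (fun i => (x i).2),
                        l₂ (fun i => (x i).2))⟩ }
/-!
On `K × K` for a finite field `K` of order `q`, consider the operations
`x ↦ (Σ aᵢ xᵢ.1 + P(x₁.2, …, xₙ.2), Σ bᵢ xᵢ.2)` where every monomial of `P` has total degree in a
fixed set `M`. They form a clone containing `⊕`, because substituting linear forms into `P` keeps
the degree of each monomial. Since `x ^ q = x` on `K`, `P` induces the same function as a reduced
polynomial (all exponents `< q`) whose monomial degrees arise from those of `P` by subtracting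
multiples of `q - 1`. If `M` is closed under this subtraction, uniqueness of reduced polynomials
shows that the operation with `P = x₁ ⋯ xₙ` lies in the clone exactly when `n ∈ M`. Finitely many
operations only involve degrees up to some `N` and so generate a clone inside the one for
`M ∩ [0, N]`; hence the clone is not finitely generated when `M` is infinite. The sets
`{n ≡ 1} ∪ {n ≡ 2, n < k (p - 1) + 2}` (mod `p - 1`) then give a strictly increasing chain of such
clones on `ZMod p × ZMod p`; `p > 2` keeps the two residue classes apart.
-/

open MvPolynomial Filter

def reduceExp (q e : ℕ) : ℕ := if e = 0 then 0 else (e - 1) % (q - 1) + 1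

lemma reduceExp_zero (q : ℕ) : reduceExp q 0 = 0 := rfl

lemma reduceExp_eq_zero_iff {q e : ℕ} : reduceExp q e = 0 ↔ e = 0 := by
  unfold reduceExp; split_ifs <;> simp_all

lemma reduceExp_le {q : ℕ} (hq : 1 < q) (e : ℕ) : reduceExp q e ≤ q - 1 := by
  unfold reduceExp
  split_ifs
  · omega
  · have := Nat.mod_lt (e - 1) (show 0 < q - 1 by omega)
    omega

lemma exists_eq_reduceExp_add (q e : ℕ) : ∃ k, e = reduceExp q e + (q - 1) * k := by
  unfold reduceExp
  split_ifs with he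
  · exact ⟨0, by simp [he]⟩
  · exact ⟨(e - 1) / (q - 1), by have := Nat.mod_add_div (e - 1) (q - 1); omega⟩

lemma pow_reduceExp {K : Type*} [Field K] [Fintype K] (x : K) (e : ℕ) :
    x ^ reduceExp (Fintype.card K) e = x ^ e := by
  obtain ⟨k, hk⟩ := exists_eq_reduceExp_add (Fintype.card K) e
  rcases eq_or_ne x 0 with rfl | hx
  · simp only [zero_pow_eq, reduceExp_eq_zero_iff]
  · conv_rhs => rw [hk, pow_add, pow_mul, FiniteField.pow_card_sub_one_eq_one x hx, one_pow,
      mul_one]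

lemma IsPMinor.mem_of_add_mul_mem {p : ℕ} {M : Set ℕ} (hM : IsPMinor p M) {t : ℕ}
    (ht : 1 ≤ t) :
    ∀ k, t + (p - 1) * k ∈ M → t ∈ M
  | 0, h => by simpa using h
  | k + 1, h => hM.mem_of_add_mul_mem ht k <| by
      rw [mul_add_one] at h
      simpa [← add_assoc] using hM _ h (by omega)

lemma IsPMinor.inter_Iic {p : ℕ} {M : Set ℕ} (hM : IsPMinor p M) (N : ℕ) :
    IsPMinor p (M ∩ Set.Iic N) :=
  fun n hn hgt => ⟨hM n hn.1 hgt, (Nat.sub_le n _).trans hn.2⟩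

section PolynomialReduction

universe u

variable {σ : Type u} {R : Type*} [CommRing R]

noncomputable def restrictTotalDegreeIn (σ R : Type*) [CommRing R] (M : Set ℕ) :
    Submodule R (MvPolynomial σ R) :=
  restrictSupport R {d : σ →₀ ℕ | d.degree ∈ M}

lemma homogeneousSubmodule_le_restrictTotalDegreeIn {M : Set ℕ} {n : ℕ} (hn : n ∈ M) :
    homogeneousSubmodule σ R n ≤ restrictTotalDegreeIn σ R M := by
  rw [homogeneousSubmodule_eq_finsupp_supported]
  exact restrictSupport_mono R fun d (hd : d.degree = n) => show d.degree ∈ M from hd ▸ hn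

lemma aeval_mem_restrictTotalDegreeIn {τ : Type*} {M : Set ℕ} {P : MvPolynomial σ R}
    (hP : P ∈ restrictTotalDegreeIn σ R M) {g : σ → MvPolynomial τ R}
    (hg : ∀ i, (g i).IsHomogeneous 1) : aeval g P ∈ restrictTotalDegreeIn τ R M := by
  rw [← support_sum_monomial_coeff P, map_sum]
  refine Submodule.sum_mem _ fun d hd =>
    homogeneousSubmodule_le_restrictTotalDegreeIn (hP hd) ?_
  simpa using (isHomogeneous_monomial (coeff d P) rfl).aeval g hg

noncomputable def reduceDegrees (q : ℕ) (d : σ →₀ ℕ) : σ →₀ ℕ :=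
  d.mapRange (reduceExp q) (reduceExp_zero q)

lemma eq_zero_of_reduceDegrees_eq_zero {q : ℕ} {d : σ →₀ ℕ} (h : reduceDegrees q d = 0) :
    d = 0 := by
  ext i
  simpa [reduceDegrees, reduceExp_eq_zero_iff] using DFunLike.congr_fun h i

lemma exists_degree_eq_degree_reduceDegrees_add (q : ℕ) (d : σ →₀ ℕ) :
    ∃ k, d.degree = (reduceDegrees q d).degree + (q - 1) * k := by
  choose k hk using exists_eq_reduceExp_add q
  refine ⟨d.sum fun _ e => k e, ?_⟩
  change d.sum (fun _ e => e) = (reduceDegrees q d).sum (fun _ e => e) + _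
  rw [reduceDegrees, Finsupp.sum_mapRange_index fun _ => rfl, Finsupp.sum, Finsupp.sum,
    Finsupp.sum, Finset.mul_sum, ← Finset.sum_add_distrib]
  exact Finset.sum_congr rfl fun i _ => hk (d i)

lemma IsPMinor.degree_reduceDegrees_mem {q : ℕ} {M : Set ℕ} (hM : IsPMinor q M) {d : σ →₀ ℕ}
    (hd : d.degree ∈ M) : (reduceDegrees q d).degree ∈ M := by
  obtain ⟨k, hk⟩ := exists_degree_eq_degree_reduceDegrees_add q d
  rcases Nat.eq_zero_or_pos (reduceDegrees q d).degree with h0 | hpos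
  · have hd0 := eq_zero_of_reduceDegrees_eq_zero ((Finsupp.degree_eq_zero_iff _).1 h0)
    subst hd0
    simpa [reduceDegrees] using hd
  · exact hM.mem_of_add_mul_mem hpos k (hk ▸ hd)

noncomputable def reducePoly (q : ℕ) (P : MvPolynomial σ R) : MvPolynomial σ R :=
  ∑ d ∈ P.support, monomial (reduceDegrees q d) (coeff d P)

lemma reducePoly_mem_restrictSupport {q : ℕ} {P : MvPolynomial σ R} {s : Set (σ →₀ ℕ)}
    (h : ∀ d ∈ P.support, reduceDegrees q d ∈ s) : reducePoly q P ∈ restrictSupport R s :=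
  Submodule.sum_mem _ fun d hd => (monomial_mem_restrictSupport _).2 (Or.inl (h d hd))

variable {K : Type u} [Field K] [Fintype K]

lemma eval_reducePoly (P : MvPolynomial σ K) (v : σ → K) :
    eval v (reducePoly (Fintype.card K) P) = eval v P := by
  conv_rhs => rw [← support_sum_monomial_coeff P]
  rw [reducePoly, map_sum, map_sum]
  refine Finset.sum_congr rfl fun d _ => ?_
  rw [eval_monomial, eval_monomial, reduceDegrees,
    Finsupp.prod_mapRange_index fun _ => pow_zero _]
  simp only [pow_reduceExp]

lemma reducePoly_mem_restrictDegree (P : MvPolynomial σ K) :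
    reducePoly (Fintype.card K) P ∈ restrictDegree σ K (Fintype.card K - 1) :=
  reducePoly_mem_restrictSupport fun d _ i => reduceExp_le Fintype.one_lt_card (d i)

theorem mem_restrictTotalDegreeIn_of_eval_eq [Finite σ] {M : Set ℕ}
    (hM : IsPMinor (Fintype.card K) M) {P Q : MvPolynomial σ K}
    (hP : P ∈ restrictTotalDegreeIn σ K M) (hQ : Q ∈ restrictDegree σ K (Fintype.card K - 1))
    (h : ∀ v, eval v Q = eval v P) : Q ∈ restrictTotalDegreeIn σ K M := by
  have hQP : Q = reducePoly (Fintype.card K) P := by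
    refine sub_eq_zero.1 (eq_zero_of_eval_eq_zero _ _ _ (fun v => ?_)
      (sub_mem hQ (reducePoly_mem_restrictDegree P)))
    rw [map_sub, eval_reducePoly, h, sub_self]
  rw [hQP]
  exact reducePoly_mem_restrictSupport fun d hd => hM.degree_reduceDegrees_mem (hP hd)

end PolynomialReduction

lemma MvPolynomial.eval_aeval {σ τ R : Type*} [CommRing R] (g : σ → MvPolynomial τ R)
    (v : τ → R) (P : MvPolynomial σ R) :
    eval v (aeval g P) = eval (fun i => eval v (g i)) P := by
  rw [aeval_eq_bind₁]
  exact eval₂Hom_bind₁ _ _ _ _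

section PolyClone

variable {R : Type} [CommRing R]

noncomputable def polyOp {n : ℕ} (a b : Fin (n + 1) → R) (P : MvPolynomial (Fin (n + 1)) R) :
    (Fin (n + 1) → R × R) → R × R :=
  fun x => (∑ i, a i * (x i).1 + eval (fun i => (x i).2) P, ∑ i, b i * (x i).2)

def polyClone (R : Type) [CommRing R] (M : Set ℕ) : Set (Ops (R × R)) :=
  { h | ∃ (a b : Fin (h.1 + 1) → R) (P : MvPolynomial (Fin (h.1 + 1)) R),
      P ∈ restrictTotalDegreeIn _ R M ∧ h.2 = polyOp a b P }

lemma mem_polyClone_mk {M : Set ℕ} {n : ℕ} {f : (Fin (n + 1) → R × R) → R × R} :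
    (⟨n, f⟩ : Ops (R × R)) ∈ polyClone R M ↔ ∃ (a b : Fin (n + 1) → R)
      (P : MvPolynomial (Fin (n + 1)) R), P ∈ restrictTotalDegreeIn _ R M ∧ f = polyOp a b P :=
  Iff.rfl

lemma polyClone_mono {M M' : Set ℕ} (h : M ⊆ M') : polyClone R M ⊆ polyClone R M' :=
  fun _ ⟨a, b, P, hP, he⟩ => ⟨a, b, P, restrictSupport_mono R (fun _ hd => h hd) hP, he⟩

lemma proj_mem_polyClone (M : Set ℕ) (n : ℕ) (j : Fin (n + 1)) :
    (⟨n, fun x => x j⟩ : Ops (R × R)) ∈ polyClone R M :=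
  ⟨Pi.single j 1, Pi.single j 1, 0, zero_mem _, by
    funext x; ext <;> simp [polyOp, Pi.single_apply]⟩

lemma plusOp_mem_polyClone (M : Set ℕ) : plusOp (R × R) ∈ polyClone R M :=
  mem_polyClone_mk.2 ⟨1, 1, 0, zero_mem _, by funext x; ext <;> simp [polyOp, Fin.sum_univ_two]⟩

lemma isHomogeneous_linearForm {m : ℕ} (c : Fin (m + 1) → R) :
    (∑ j, c j • X j : MvPolynomial (Fin (m + 1)) R).IsHomogeneous 1 :=
  Submodule.sum_mem (homogeneousSubmodule _ R 1) fun j _ =>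
    Submodule.smul_mem _ _ (isHomogeneous_X R j)

lemma polyOp_comp {n m : ℕ} (a b : Fin (n + 1) → R) (P : MvPolynomial (Fin (n + 1)) R)
    (A B : Fin (n + 1) → Fin (m + 1) → R) (Q : Fin (n + 1) → MvPolynomial (Fin (m + 1)) R) :
    (fun x => polyOp a b P fun i => polyOp (A i) (B i) (Q i) x) =
      polyOp (fun j => ∑ i, a i * A i j) (fun j => ∑ i, b i * B i j)
        (∑ i, a i • Q i + aeval (fun i => ∑ j, B i j • X j) P) := by
  funext x
  refine Prod.ext ?_ ?_
  · simp only [polyOp, eval_aeval, map_add, map_sum, smul_eval, eval_X]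
    simp only [mul_add, Finset.sum_add_distrib, Finset.mul_sum, Finset.sum_mul, mul_assoc]
    rw [Finset.sum_comm (f := fun i j => a i * (A i j * (x j).1))]
    ring
  · simp only [polyOp, Finset.mul_sum, Finset.sum_mul, mul_assoc]
    exact Finset.sum_comm

lemma opProd_polyClone_subset (M : Set ℕ) :
    OpProd (polyClone R M) (polyClone R M) ⊆ polyClone R M := by
  rintro _ ⟨n, m, f, g, hf, hg, rfl⟩
  obtain ⟨a, b, P, hP, rfl⟩ := mem_polyClone_mk.1 hf
  choose A B Q hQ hgQ using fun i => mem_polyClone_mk.1 (hg i)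
  obtain rfl : g = fun i => polyOp (A i) (B i) (Q i) := funext hgQ
  refine ⟨_, _, _, add_mem (Submodule.sum_mem _ fun i _ => Submodule.smul_mem _ _ (hQ i))
    (aeval_mem_restrictTotalDegreeIn hP fun i => isHomogeneous_linearForm (B i)), polyOp_comp ..⟩

lemma isClone_polyClone (M : Set ℕ) : IsClone (polyClone R M) :=
  ⟨proj_mem_polyClone M, opProd_polyClone_subset M⟩

end PolyClone

section NotFinitelyGenerated

lemma subset_cloneGen {A : Type} (F : Set (Ops A)) : F ⊆ cloneGen F :=
  Set.subset_sInter fun _ hC => hC.2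

lemma cloneGen_subset {A : Type} {F C : Set (Ops A)} (hC : IsClone C) (hF : F ⊆ C) :
    cloneGen F ⊆ C :=
  Set.sInter_subset_of_mem ⟨hC, hF⟩

variable {R : Type} [CommRing R]

lemma exists_mem_polyClone_inter_Iic {M : Set ℕ} {h : Ops (R × R)} (hh : h ∈ polyClone R M) :
    ∃ N, h ∈ polyClone R (M ∩ Set.Iic N) :=
  let ⟨a, b, P, hP, he⟩ := hh
  ⟨P.totalDegree, a, b, P, fun _ hd => ⟨hP hd, le_totalDegree hd⟩, he⟩

lemma Set.Finite.exists_subset_polyClone_inter_Iic {M : Set ℕ} {F : Set (Ops (R × R))}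
    (hF : F.Finite) (hFM : F ⊆ polyClone R M) : ∃ N, F ⊆ polyClone R (M ∩ Set.Iic N) := by
  have : ∀ᶠ N in atTop, ∀ h ∈ F, h ∈ polyClone R (M ∩ Set.Iic N) := by
    refine (eventually_all_finite hF).2 fun h hh => ?_
    obtain ⟨N, hN⟩ := exists_mem_polyClone_inter_Iic (hFM hh)
    exact eventually_atTop.2 ⟨N, fun N' hN' =>
      polyClone_mono (Set.inter_subset_inter_right _ (Set.Iic_subset_Iic.2 hN')) hN⟩
  exact this.exists

noncomputable def monomialOp (R : Type) [CommRing R] (n : ℕ) : Ops (R × R) :=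
  ⟨n, polyOp 0 0 (monomial (∑ i, Finsupp.single i 1) 1)⟩

variable {K : Type} [Field K] [Fintype K]

lemma monomialOp_mem_polyClone_iff {M : Set ℕ} (hM : IsPMinor (Fintype.card K) M) (n : ℕ) :
    monomialOp K n ∈ polyClone K M ↔ n + 1 ∈ M := by
  rw [monomialOp, mem_polyClone_mk]
  set d : Fin (n + 1) →₀ ℕ := ∑ i, Finsupp.single i 1
  have hdeg : d.degree = n + 1 := by simp [d]
  constructor
  · rintro ⟨a, b, P, hP, he⟩
    have hreduced : monomial d (1 : K) ∈ restrictDegree _ K (Fintype.card K - 1) :=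
      (monomial_mem_restrictSupport _).2 <| Or.inl fun j => by
        simpa [d, Finsupp.single_apply] using Nat.le_sub_one_of_lt Fintype.one_lt_card
    have hmon := mem_restrictTotalDegreeIn_of_eval_eq hM hP hreduced fun v => by
      simpa [polyOp] using congrArg Prod.fst (congrFun he fun i => (0, v i))
    have hd : d ∈ (monomial d (1 : K)).support := by simp
    simpa [hdeg] using hmon hd
  · exact fun h => ⟨0, 0, _, (monomial_mem_restrictSupport _).2 <|
      Or.inl (by rwa [Set.mem_ofPred_eq, hdeg]), rfl⟩

theorem not_finGenClone_polyClone {M : Set ℕ} (hM : IsPMinor (Fintype.card K) M)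
    (hinf : M.Infinite) : ¬ FinGenClone (polyClone K M) := by
  rintro ⟨F, hF, hFM⟩
  obtain ⟨N, hN⟩ := hF.exists_subset_polyClone_inter_Iic (hFM ▸ subset_cloneGen F)
  obtain ⟨e, heM, hNe⟩ := hinf.exists_gt N
  obtain ⟨n, rfl⟩ : ∃ n, e = n + 1 := Nat.exists_eq_add_one.2 (by omega)
  have hmem : monomialOp K n ∈ polyClone K (M ∩ Set.Iic N) :=
    cloneGen_subset (isClone_polyClone _) hN (hFM ▸ (monomialOp_mem_polyClone_iff hM n).2 heM)
  exact absurd ((monomialOp_mem_polyClone_iff (hM.inter_Iic N) n).1 hmem).2 (by simpa using hNe)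

end NotFinitelyGenerated

def degreeSet (p k : ℕ) : Set ℕ :=
  {n | n ≡ 1 [MOD p - 1]} ∪ {n | n ≡ 2 [MOD p - 1] ∧ n < k * (p - 1) + 2}

lemma isPMinor_degreeSet (p k : ℕ) : IsPMinor p (degreeSet p k) := by
  intro n hn hgt
  have hmod : n - (p - 1) ≡ n [MOD p - 1] := by
    conv_rhs => rw [← Nat.sub_add_cancel hgt.le]
    exact (Nat.add_modEq_left_iff.2 dvd_rfl).symm
  rcases hn with h1 | ⟨h2, hlt⟩
  · exact Or.inl (hmod.trans h1)
  · exact Or.inr ⟨hmod.trans h2, by omega⟩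

lemma isPMinor_card_degreeSet (p k : ℕ) [NeZero p] :
    IsPMinor (Fintype.card (ZMod p)) (degreeSet p k) := by
  rw [ZMod.card]
  exact isPMinor_degreeSet p k

lemma degreeSet_infinite {p : ℕ} (hp : 1 < p) (k : ℕ) : (degreeSet p k).Infinite :=
  (Nat.frequently_atTop_iff_infinite.1 (Nat.frequently_modEq (by omega) 1)).mono
    Set.subset_union_left

lemma degreeSet_mono (p : ℕ) {k l : ℕ} (hkl : k ≤ l) : degreeSet p k ⊆ degreeSet p l :=
  Set.union_subset_union_right _ fun _ ⟨hmod, hlt⟩ =>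
    ⟨hmod, hlt.trans_le (by gcongr)⟩

lemma polyClone_degreeSet_strictMono {p : ℕ} [Fact p.Prime] (hp2 : 2 < p) :
    StrictMono fun k => polyClone (ZMod p) (degreeSet p k) := by
  refine strictMono_nat_of_lt_succ fun k => (Set.ssubset_iff_of_subset
    (polyClone_mono (degreeSet_mono p k.le_succ))).2
      ⟨monomialOp (ZMod p) (k * (p - 1) + 1), ?_, ?_⟩
  · rw [monomialOp_mem_polyClone_iff (isPMinor_card_degreeSet p _)]
    exact Or.inr ⟨Nat.mul_add_mod_self_right k (p - 1) 2, by rw [Nat.succ_mul]; omega⟩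
  · rw [monomialOp_mem_polyClone_iff (isPMinor_card_degreeSet p _)]
    rintro (h1 | ⟨-, hlt⟩)
    · have h2 : k * (p - 1) + 1 + 1 ≡ 2 [MOD p - 1] :=
        Nat.mul_add_mod_self_right k (p - 1) 2
      have := (Nat.modEq_iff_dvd' (by norm_num)).1 (h1.symm.trans h2)
      have := Nat.le_of_dvd one_pos this
      omega
    · omega

/-- For a prime `p > 2`, there are infinitely many clones on
`ZMod p × ZMod p` which contain the componentwise addition `⊕` and are not
finitely generated. -/
theorem statement2 (p : ℕ) (hp : p.Prime) (hp2 : 2 < p) :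
    { C : Set (Ops (ZMod p × ZMod p)) |
        IsClone C ∧ plusOp (ZMod p × ZMod p) ∈ C ∧ ¬ FinGenClone C }.Infinite := by
  have := Fact.mk hp
  refine Set.infinite_of_injective_forall_mem (polyClone_degreeSet_strictMono hp2).injective
    fun k => ⟨isClone_polyClone _, plusOp_mem_polyClone _, ?_⟩
  exact not_finGenClone_polyClone (isPMinor_card_degreeSet p k) (degreeSet_infinite hp.one_lt k)
end

section
/- Let p be a prime and let M₁, M₂ be p-minor subsets of ℕ₀. Then 𝒞(M₁ ∩ M₂) = 𝒞(M₁) ∩ 𝒞(M₂) and 𝒞(M₁ ∪ M₂) = 𝒞(M₁) + 𝒞(M₂); that is, 𝒞 is a lattice homomorphism from the lattice of p-minor subsets (under intersection and union) to the lattice of linearly closed clonoids on Z_p (under intersection and sum). -/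
/-!
Over `ZMod p` a reduced polynomial that vanishes at every point of `(ZMod p)ⁿ⁺¹` is zero, so each
member of `𝒞(M)` is induced by exactly one reduced polynomial in the first `n + 1` variables, and
that polynomial lies in `𝒫(M)`. Intersections are then preserved because the inducing polynomial
is unique, and unions because a polynomial in `𝒫(M₁ ∪ M₂)` splits monomialwise into a summand in
`𝒫(M₁)` and one in `𝒫(M₂)`.
-/

open MvPolynomial

def IsReducedIn (p n : ℕ) (f : MvPolynomial ℕ (ZMod p)) : Prop :=
  IsReducedPoly p f ∧ ∀ i ∈ f.vars, i < n + 1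

namespace IsReducedIn

variable {p n : ℕ} {f g h : MvPolynomial ℕ (ZMod p)}

lemma of_support_subset_union (hf : IsReducedIn p n f) (hg : IsReducedIn p n g)
    (hh : h.support ⊆ f.support ∪ g.support) : IsReducedIn p n h := by
  refine ⟨fun d hd => ?_, fun i hi => ?_⟩
  · rcases Finset.mem_union.mp (hh hd) with hd | hd
    exacts [hf.1 d hd, hg.1 d hd]
  · obtain ⟨d, hd, hid⟩ := (mem_vars_iff_mem_support i).mp hi
    rcases Finset.mem_union.mp (hh hd) with hd | hd
    exacts [hf.2 i ((mem_vars_iff_mem_support i).mpr ⟨d, hd, hid⟩),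
      hg.2 i ((mem_vars_iff_mem_support i).mpr ⟨d, hd, hid⟩)]

lemma mono (hf : IsReducedIn p n f) (hg : g.support ⊆ f.support) : IsReducedIn p n g :=
  hf.of_support_subset_union hf (by rwa [Finset.union_self])

lemma add (hf : IsReducedIn p n f) (hg : IsReducedIn p n g) : IsReducedIn p n (f + g) :=
  hf.of_support_subset_union hg support_add

lemma sub (hf : IsReducedIn p n f) (hg : IsReducedIn p n g) : IsReducedIn p n (f - g) :=
  hf.of_support_subset_union hg (support_sub ℕ f g)

end IsReducedIn

section InducedOp

variable {p : ℕ} (n : ℕ) (f g : MvPolynomial ℕ (ZMod p))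

lemma inducedOp_zero : inducedOp p n 0 = fun _ => 0 := by
  funext x; simp [inducedOp]

lemma inducedOp_add : inducedOp p n (f + g) = fun x => inducedOp p n f x + inducedOp p n g x := by
  funext x; simp [inducedOp]

lemma inducedOp_sub : inducedOp p n (f - g) = fun x => inducedOp p n f x - inducedOp p n g x := by
  funext x; simp [inducedOp]

variable {n f g}

/-- Renaming to `Fin (n + 1)` reduces this to `MvPolynomial.eq_zero_of_eval_eq_zero`: a reduced
polynomial has all degrees below `Fintype.card (ZMod p) = p`. -/
lemma IsReducedIn.eq_zero_of_inducedOp_eq_zero (hp : p.Prime) (hf : IsReducedIn p n f)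
    (h0 : inducedOp p n f = fun _ => 0) : f = 0 := by
  have := Fact.mk hp
  obtain ⟨g, rfl⟩ := exists_rename_eq_of_vars_subset_range f (Fin.val : Fin (n + 1) → ℕ)
    Fin.val_injective fun i hi => ⟨⟨i, hf.2 i hi⟩, rfl⟩
  suffices g = 0 by rw [this, map_zero]
  refine eq_zero_of_eval_eq_zero _ _ g (fun x => ?_) ?_
  · have hx : (fun i => if h : i < n + 1 then x ⟨i, h⟩ else 0) ∘ Fin.val = x :=
      funext fun j => dif_pos j.isLt
    simpa only [inducedOp, eval_rename, hx] using congrFun h0 x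
  · rw [mem_restrictDegree]
    intro s hs i
    have hmem : Finsupp.mapDomain Fin.val s ∈ (rename Fin.val g).support := by
      rwa [mem_support_iff, coeff_rename_mapDomain _ Fin.val_injective, ← mem_support_iff]
    simpa [ZMod.card, Finsupp.mapDomain_apply Fin.val_injective] using hf.1 _ hmem i

lemma IsReducedIn.eq_of_inducedOp_eq (hp : p.Prime) (hf : IsReducedIn p n f)
    (hg : IsReducedIn p n g) (h : inducedOp p n f = inducedOp p n g) : f = g := by
  refine sub_eq_zero.mp ((hf.sub hg).eq_zero_of_inducedOp_eq_zero hp ?_)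
  rw [inducedOp_sub, h]
  simp

end InducedOp

lemma support_sum_monomial_coeff_subset {σ R : Type*} [CommSemiring R] [DecidableEq σ]
    (f : MvPolynomial σ R) (s : Finset (σ →₀ ℕ)) :
    (∑ d ∈ s, monomial d (coeff d f)).support ⊆ s :=
  support_sum.trans <| Finset.biUnion_subset.mpr fun _ hd =>
    support_monomial_subset.trans (Finset.singleton_subset_iff.mpr hd)

section PM

variable {p : ℕ} {M M₁ M₂ : Set ℕ} {f g : MvPolynomial ℕ (ZMod p)}

lemma PM_inter : PM p (M₁ ∩ M₂) = PM p M₁ ∩ PM p M₂ := by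
  ext f
  simp only [PM, Set.mem_ofPred_eq, Set.mem_inter_iff, forall_and]

lemma PM_mono (h : M₁ ⊆ M₂) : PM p M₁ ⊆ PM p M₂ :=
  fun _ hf d hd => h (hf d hd)

lemma add_mem_PM (hf : f ∈ PM p M) (hg : g ∈ PM p M) : f + g ∈ PM p M := by
  classical
  intro d hd
  rcases Finset.mem_union.mp (support_add hd) with hd | hd
  exacts [hf d hd, hg d hd]

lemma exists_add_of_mem_PM_union (hf : f ∈ PM p (M₁ ∪ M₂)) :
    ∃ f₁ ∈ PM p M₁, ∃ f₂ ∈ PM p M₂,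
      f₁.support ⊆ f.support ∧ f₂.support ⊆ f.support ∧ f₁ + f₂ = f := by
  classical
  let P : (ℕ →₀ ℕ) → Prop := fun d => (d.sum fun _ e => e) ∈ M₁
  have hsplit := support_sum_monomial_coeff_subset f
  refine ⟨∑ d ∈ f.support with P d, monomial d (coeff d f),
    fun d hd => (Finset.mem_filter.mp (hsplit _ hd)).2,
    ∑ d ∈ f.support with ¬ P d, monomial d (coeff d f), fun d hd => ?_,
    fun d hd => (Finset.mem_filter.mp (hsplit _ hd)).1,
    fun d hd => (Finset.mem_filter.mp (hsplit _ hd)).1, ?_⟩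
  · obtain ⟨hd, hd₁⟩ := Finset.mem_filter.mp (hsplit _ hd)
    exact (hf d hd).resolve_left hd₁
  · rw [Finset.sum_filter_add_sum_filter_not, ← as_sum]

end PM

section CM

variable {p : ℕ}

lemma mem_CM_iff {M : Set ℕ} {n : ℕ} {a : (Fin (n + 1) → ZMod p) → ZMod p} :
    (⟨n, a⟩ : Ops (ZMod p)) ∈ CM p M ↔
      ∃ f ∈ PM p M, IsReducedIn p n f ∧ a = inducedOp p n f := by
  constructor
  · rintro (⟨m, hm⟩ | ⟨m, f, -, hred, hv, hM, hm⟩) <;>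
      obtain ⟨rfl, ha⟩ := Sigma.mk.inj_iff.mp hm
    · refine ⟨0, by simp [PM], ⟨by simp [IsReducedPoly], by simp⟩, ?_⟩
      rw [inducedOp_zero, eq_of_heq ha]
    · exact ⟨f, hM, ⟨hred, hv⟩, eq_of_heq ha⟩
  · rintro ⟨f, hM, hf, rfl⟩
    by_cases hf0 : f = 0
    · exact Or.inl ⟨n, by rw [hf0, inducedOp_zero]⟩
    · exact Or.inr ⟨n, f, hf0, hf.1, hf.2, hM, rfl⟩

lemma mem_LCCsum_iff {D₁ D₂ : Set (Ops (ZMod p))} {n : ℕ}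
    {a : (Fin (n + 1) → ZMod p) → ZMod p} :
    (⟨n, a⟩ : Ops (ZMod p)) ∈ LCCsum p D₁ D₂ ↔
      ∃ f g, (⟨n, f⟩ : Ops (ZMod p)) ∈ D₁ ∧ (⟨n, g⟩ : Ops (ZMod p)) ∈ D₂ ∧
        a = fun x => f x + g x := by
  constructor
  · rintro ⟨m, f, g, hf, hg, h⟩
    obtain ⟨rfl, ha⟩ := Sigma.mk.inj_iff.mp h
    exact ⟨f, g, hf, hg, eq_of_heq ha⟩
  · rintro ⟨f, g, hf, hg, rfl⟩
    exact ⟨n, f, g, hf, hg, rfl⟩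

theorem CM_inter (hp : p.Prime) (M₁ M₂ : Set ℕ) :
    CM p (M₁ ∩ M₂) = CM p M₁ ∩ CM p M₂ := by
  ext ⟨n, a⟩
  simp only [Set.mem_inter_iff, mem_CM_iff, PM_inter]
  constructor
  · rintro ⟨f, ⟨hf₁, hf₂⟩, hf, rfl⟩
    exact ⟨⟨f, hf₁, hf, rfl⟩, ⟨f, hf₂, hf, rfl⟩⟩
  · rintro ⟨⟨f, hf₁, hf, rfl⟩, ⟨g, hg₂, hg, hfg⟩⟩
    obtain rfl := hf.eq_of_inducedOp_eq hp hg hfg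
    exact ⟨f, ⟨hf₁, hg₂⟩, hf, rfl⟩

theorem CM_union (M₁ M₂ : Set ℕ) :
    CM p (M₁ ∪ M₂) = LCCsum p (CM p M₁) (CM p M₂) := by
  ext ⟨n, a⟩
  rw [mem_LCCsum_iff, mem_CM_iff]
  constructor
  · rintro ⟨f, hfM, hf, rfl⟩
    obtain ⟨f₁, hf₁M, f₂, hf₂M, hs₁, hs₂, rfl⟩ := exists_add_of_mem_PM_union hfM
    exact ⟨_, _, mem_CM_iff.mpr ⟨f₁, hf₁M, hf.mono hs₁, rfl⟩,
      mem_CM_iff.mpr ⟨f₂, hf₂M, hf.mono hs₂, rfl⟩, inducedOp_add n f₁ f₂⟩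
  · rintro ⟨_, _, h₁, h₂, rfl⟩
    obtain ⟨f₁, hf₁M, hf₁, rfl⟩ := mem_CM_iff.mp h₁
    obtain ⟨f₂, hf₂M, hf₂, rfl⟩ := mem_CM_iff.mp h₂
    exact ⟨f₁ + f₂, add_mem_PM (PM_mono Set.subset_union_left hf₁M)
      (PM_mono Set.subset_union_right hf₂M), hf₁.add hf₂, (inducedOp_add n f₁ f₂).symm⟩

end CM

theorem statement5_general (p : ℕ) (hp : p.Prime) (M₁ M₂ : Set ℕ) :
    CM p (M₁ ∩ M₂) = CM p M₁ ∩ CM p M₂ ∧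
    CM p (M₁ ∪ M₂) = LCCsum p (CM p M₁) (CM p M₂) :=
  ⟨CM_inter hp M₁ M₂, CM_union M₁ M₂⟩

/-- `𝒞` is a lattice homomorphism: it sends intersections of `p`-minor
subsets to intersections, and unions to sums of linearly closed clonoids. -/
theorem statement5 (p : ℕ) (hp : p.Prime) (M₁ M₂ : Set ℕ)
    (h₁ : IsPMinor p M₁) (h₂ : IsPMinor p M₂) :
    CM p (M₁ ∩ M₂) = CM p M₁ ∩ CM p M₂ ∧
    CM p (M₁ ∪ M₂) = LCCsum p (CM p M₁) (CM p M₂) :=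
  statement5_general p hp M₁ M₂
end

section
/- Let p be a prime and let M₁, M₂ be p-minor subsets of ℕ₀. Then M₁ ⊆ M₂ if and only if 𝒞(M₁) ⊆ 𝒞(M₂). -/
/-!
Enlarging `M` only weakens the degree condition, so `𝒞(·)` is monotone. Conversely, for
`m ∈ M₁` the square-free monomial `x₀ x₁ ⋯ x_{m-1}` is reduced of total degree `m`, so it
induces an operation in `𝒞(M₁)`. Since `𝒞(M₂)` is described by reduced polynomials, and a
reduced polynomial over `ZMod p` is determined by the function it induces, that operation can
only lie in `𝒞(M₂)` through this very monomial, which forces `m ∈ M₂`.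
-/

open MvPolynomial

lemma CM_mono {p : ℕ} {M₁ M₂ : Set ℕ} (hM : M₁ ⊆ M₂) : CM p M₁ ⊆ CM p M₂ := by
  rintro h (hzero | ⟨n, f, hf0, hfred, hfvars, hfdeg, rfl⟩)
  · exact Or.inl hzero
  · exact Or.inr ⟨n, f, hf0, hfred, hfvars, fun d hd => hM (hfdeg d hd), rfl⟩

section Reduced

variable {p : ℕ} [Fact p.Prime]

lemma IsReducedPoly.eq_zero_of_inducedOp_eq_zero {n : ℕ} {f : MvPolynomial ℕ (ZMod p)}
    (hred : IsReducedPoly p f) (hvars : ∀ i ∈ f.vars, i < n + 1)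
    (hzero : inducedOp p n f = 0) : f = 0 := by
  classical
  obtain ⟨q, rfl⟩ := exists_rename_eq_of_vars_subset_range f (Fin.val : Fin (n + 1) → ℕ)
    Fin.val_injective fun i hi => ⟨⟨i, hvars i hi⟩, rfl⟩
  suffices q = 0 by rw [this, map_zero]
  refine eq_zero_of_eval_eq_zero _ _ q (fun x => ?_) ?_
  · have hx := congrFun hzero x
    rwa [inducedOp, eval_rename, show ((fun i => if h : i < n + 1 then x ⟨i, h⟩ else 0) ∘
      (Fin.val : Fin (n + 1) → ℕ)) = x from funext fun j => dif_pos j.isLt] at hx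
  · rw [mem_restrictDegree, ZMod.card]
    intro s hs i
    have hs' : Finsupp.mapDomain Fin.val s ∈ (rename (Fin.val : Fin (n + 1) → ℕ) q).support := by
      rw [support_rename_of_injective Fin.val_injective]
      exact Finset.mem_image_of_mem _ hs
    simpa only [Finsupp.mapDomain_apply Fin.val_injective] using hred _ hs' i

lemma IsReducedPoly.eq_of_inducedOp_eq {n : ℕ} {f g : MvPolynomial ℕ (ZMod p)}
    (hf : IsReducedPoly p f) (hg : IsReducedPoly p g)
    (hfvars : ∀ i ∈ f.vars, i < n + 1) (hgvars : ∀ i ∈ g.vars, i < n + 1)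
    (heq : inducedOp p n f = inducedOp p n g) : f = g := by
  classical
  have hred : IsReducedPoly p (f - g) := fun d hd i =>
    (Finset.mem_union.mp (support_sub _ f g hd)).elim (hf d · i) (hg d · i)
  have hvars : ∀ i ∈ (f - g).vars, i < n + 1 := fun i hi =>
    (Finset.mem_union.mp (vars_sub_subset (p := f) (q := g) hi)).elim (hfvars i) (hgvars i)
  refine sub_eq_zero.mp (hred.eq_zero_of_inducedOp_eq_zero hvars ?_)
  funext x
  simp only [inducedOp, map_sub, Pi.zero_apply]
  exact sub_eq_zero.mpr (congrFun heq x)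

end Reduced

lemma sum_toFinsupp_range (m : ℕ) : ((Multiset.range m).toFinsupp.sum fun _ e => e) = m := by
  conv_rhs => rw [← Multiset.card_range m, ← Multiset.toFinsupp_toMultiset (Multiset.range m),
    Finsupp.card_toMultiset]
  rfl

section SquarefreeMonomial

/-- The monomial `x₀ x₁ ⋯ x_{m-1}`. -/
noncomputable def squarefreeMonomial (p m : ℕ) : MvPolynomial ℕ (ZMod p) :=
  monomial (Multiset.range m).toFinsupp 1

variable {p : ℕ} [Fact (1 < p)]

lemma support_squarefreeMonomial (m : ℕ) :
    (squarefreeMonomial p m).support = {(Multiset.range m).toFinsupp} := by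
  classical
  rw [squarefreeMonomial, support_monomial, if_neg one_ne_zero]

lemma squarefreeMonomial_ne_zero (m : ℕ) : squarefreeMonomial p m ≠ 0 :=
  (monomial_eq_zero.not).mpr one_ne_zero

lemma isReducedPoly_squarefreeMonomial (m : ℕ) : IsReducedPoly p (squarefreeMonomial p m) := by
  intro d hd i
  rw [support_squarefreeMonomial, Finset.mem_singleton] at hd
  subst hd
  rw [Multiset.toFinsupp_apply]
  exact (Multiset.nodup_iff_count_le_one.mp (Multiset.nodup_range m) i).trans
    (Nat.le_sub_one_of_lt Fact.out)

lemma vars_squarefreeMonomial_lt (m : ℕ) : ∀ i ∈ (squarefreeMonomial p m).vars, i < m + 1 := by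
  intro i hi
  rw [squarefreeMonomial, vars_monomial one_ne_zero, Multiset.toFinsupp_support,
    Multiset.mem_toFinset, Multiset.mem_range] at hi
  omega

lemma squarefreeMonomial_mem_CM {M : Set ℕ} {m : ℕ} (hm : m ∈ M) :
    (⟨m, inducedOp p m (squarefreeMonomial p m)⟩ : Ops (ZMod p)) ∈ CM p M := by
  refine Or.inr ⟨m, _, squarefreeMonomial_ne_zero m, isReducedPoly_squarefreeMonomial m,
    vars_squarefreeMonomial_lt m, fun d hd => ?_, rfl⟩
  rw [support_squarefreeMonomial, Finset.mem_singleton] at hd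
  rwa [hd, sum_toFinsupp_range]

end SquarefreeMonomial

lemma mem_of_squarefreeMonomial_mem_CM {p : ℕ} [Fact p.Prime] {M : Set ℕ} {m : ℕ}
    (hmem : (⟨m, inducedOp p m (squarefreeMonomial p m)⟩ : Ops (ZMod p)) ∈ CM p M) : m ∈ M := by
  rcases hmem with ⟨n, hzero⟩ | ⟨n, g, -, hgred, hgvars, hgdeg, hg⟩
  · obtain ⟨rfl, hzero⟩ := Sigma.mk.inj_iff.mp hzero
    exact absurd ((isReducedPoly_squarefreeMonomial m).eq_zero_of_inducedOp_eq_zero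
      (vars_squarefreeMonomial_lt m) (eq_of_heq hzero)) (squarefreeMonomial_ne_zero m)
  · obtain ⟨rfl, hg⟩ := Sigma.mk.inj_iff.mp hg
    have hfg := (isReducedPoly_squarefreeMonomial m).eq_of_inducedOp_eq hgred
      (vars_squarefreeMonomial_lt m) hgvars (eq_of_heq hg)
    have hmono : (Multiset.range m).toFinsupp ∈ g.support := by
      rw [← hfg, support_squarefreeMonomial]
      exact Finset.mem_singleton_self _
    simpa only [sum_toFinsupp_range] using hgdeg _ hmono

theorem statement6_general (p : ℕ) (hp : p.Prime) (M₁ M₂ : Set ℕ) :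
    M₁ ⊆ M₂ ↔ CM p M₁ ⊆ CM p M₂ := by
  have : Fact p.Prime := ⟨hp⟩
  exact ⟨CM_mono, fun hC _ hm =>
    mem_of_squarefreeMonomial_mem_CM (hC (squarefreeMonomial_mem_CM hm))⟩

/-- For `p`-minor subsets `M₁, M₂`: `M₁ ⊆ M₂` iff `𝒞(M₁) ⊆ 𝒞(M₂)`. -/
theorem statement6 (p : ℕ) (hp : p.Prime) (M₁ M₂ : Set ℕ)
    (h₁ : IsPMinor p M₁) (h₂ : IsPMinor p M₂) :
    M₁ ⊆ M₂ ↔ CM p M₁ ⊆ CM p M₂ :=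
  statement6_general p hp M₁ M₂
end

section
/- Let p be a prime, let d ∈ ℕ, and let g ∈ Z_p[x_1,x_2,…] be a polynomial all of whose monomials have total degree at most d, and such that the monomial x_1x_2⋯x_d (with exponent vector (1,…,1) in the first d variables) does not occur in g. Then x_1x_2⋯x_d belongs to the polynomial linearly closed clonoid generated by {x_1x_2⋯x_d + g}. -/
open MvPolynomial Finset

lemma Finsupp.degree_sum_single_one {σ : Type*} (D : Finset σ) :
    (∑ i ∈ D, Finsupp.single i 1 : σ →₀ ℕ).degree = #D := by
  simp [map_sum]

lemma Finsupp.eq_sum_single_one_of_support_eq {σ : Type*} [DecidableEq σ] {m : σ →₀ ℕ}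
    {D : Finset σ} (hsupp : m.support = D) (hdeg : m.degree ≤ #D) :
    m = ∑ i ∈ D, Finsupp.single i 1 := by
  have hpos : ∀ i ∈ D, 1 ≤ m i := fun i hi =>
    Nat.one_le_iff_ne_zero.2 (Finsupp.mem_support_iff.1 (hsupp ▸ hi))
  have hone : ∀ i ∈ D, 1 = m i := by
    refine (sum_eq_sum_iff_of_le hpos).1 (le_antisymm (Finset.sum_le_sum hpos) ?_)
    rwa [Finsupp.degree_apply, hsupp, card_eq_sum_ones] at hdeg
  ext i
  rw [Finsupp.finsetSum_apply]
  by_cases hi : i ∈ D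
  · simp [Finsupp.single_apply, hi, hone i hi]
  · simp [Finsupp.single_apply, hi, Finsupp.notMem_support_iff.1 (hsupp ▸ hi : i ∉ m.support)]

lemma Finsupp.support_sum_single_one {σ : Type*} [DecidableEq σ] (D : Finset σ) :
    (∑ i ∈ D, Finsupp.single i 1 : σ →₀ ℕ).support = D := by
  ext i
  simp [Finsupp.finsetSum_apply, Finsupp.single_apply]

section InclusionExclusion

variable {R σ : Type*} [CommRing R] [DecidableEq σ]

lemma sum_powerset_filter_superset_neg_one_pow (D T : Finset σ) :
    ∑ S ∈ D.powerset with T ⊆ S, (-1 : R) ^ #(D \ S) = if T = D then 1 else 0 := by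
  by_cases hTD : T ⊆ D
  · have hsum : ∑ S ∈ D.powerset with T ⊆ S, (-1 : R) ^ #(D \ S)
        = ∑ U ∈ (D \ T).powerset, (-1 : R) ^ #U := by
      refine sum_nbij' (D \ ·) (D \ ·) ?_ ?_ ?_ ?_ fun _ _ => rfl
      · intro S hS
        simp only [mem_filter, mem_powerset] at hS ⊢
        exact sdiff_subset_sdiff subset_rfl hS.2
      · intro U hU
        simp only [mem_filter, mem_powerset] at hU ⊢
        exact ⟨sdiff_subset,
          subset_sdiff.2 ⟨hTD, (disjoint_of_subset_left hU sdiff_disjoint).symm⟩⟩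
      · intro S hS
        simp only [mem_filter, mem_powerset] at hS
        exact Finset.sdiff_sdiff_eq_self hS.1
      · intro U hU
        rw [mem_powerset] at hU
        exact Finset.sdiff_sdiff_eq_self (hU.trans sdiff_subset)
    have hInt := congrArg (Int.cast : ℤ → R) (sum_powerset_neg_one_pow_card (x := D \ T))
    push_cast at hInt
    rw [hsum, hInt]
    exact if_congr (sdiff_eq_empty_iff_subset.trans ⟨hTD.antisymm, fun h => h ▸ subset_rfl⟩)
      rfl rfl
  · rw [filter_false_of_mem fun S hS hTS => hTD (hTS.trans (mem_powerset.1 hS)), sum_empty,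
      if_neg fun h => hTD h.subset]

noncomputable def restrictTo (S : Finset σ) : MvPolynomial σ R →ₐ[R] MvPolynomial σ R :=
  aeval fun i => if i ∈ S then X i else 0

lemma restrictTo_monomial (S : Finset σ) (m : σ →₀ ℕ) (c : R) :
    restrictTo S (monomial m c) = if m.support ⊆ S then monomial m c else 0 := by
  rw [restrictTo, aeval_monomial, monomial_eq, Finsupp.prod, Finsupp.prod, algebraMap_eq]
  split_ifs with h
  · exact congrArg _ (prod_congr rfl fun i hi => by rw [if_pos (h hi)])
  · obtain ⟨i, hi, hiS⟩ := not_subset.1 h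
    rw [prod_eq_zero hi (by rw [if_neg hiS]; exact zero_pow (Finsupp.mem_support_iff.1 hi)),
      mul_zero]

lemma sum_powerset_neg_one_pow_smul_restrictTo_monomial (D : Finset σ) (m : σ →₀ ℕ)
    (c : R) :
    ∑ S ∈ D.powerset, (-1 : R) ^ #(D \ S) • restrictTo S (monomial m c)
      = if m.support = D then monomial m c else 0 := by
  simp only [restrictTo_monomial, smul_ite, smul_zero]
  rw [← sum_filter, ← sum_smul, sum_powerset_filter_superset_neg_one_pow, ite_smul, one_smul,
    zero_smul]

lemma sum_powerset_neg_one_pow_smul_restrictTo (D : Finset σ) (f : MvPolynomial σ R) :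
    ∑ S ∈ D.powerset, (-1 : R) ^ #(D \ S) • restrictTo S f
      = ∑ m ∈ f.support with m.support = D, monomial m (coeff m f) := by
  conv_lhs => rw [← support_sum_monomial_coeff f]
  simp only [map_sum, smul_sum]
  rw [sum_comm, sum_filter]
  exact sum_congr rfl fun m _ => sum_powerset_neg_one_pow_smul_restrictTo_monomial D m _

lemma sum_powerset_neg_one_pow_smul_restrictTo_of_totalDegree_le {D : Finset σ}
    {f : MvPolynomial σ R} (hf : f.totalDegree ≤ #D) :
    ∑ S ∈ D.powerset, (-1 : R) ^ #(D \ S) • restrictTo S f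
      = monomial (∑ i ∈ D, Finsupp.single i 1) (coeff (∑ i ∈ D, Finsupp.single i 1) f) := by
  set m₀ : σ →₀ ℕ := ∑ i ∈ D, Finsupp.single i 1
  have honly : ∀ m ∈ f.support, m.support = D → m = m₀ := fun m hm hsupp =>
    Finsupp.eq_sum_single_one_of_support_eq hsupp ((le_totalDegree hm).trans hf)
  rw [sum_powerset_neg_one_pow_smul_restrictTo, sum_eq_single m₀]
  · intro m hm hne
    rw [mem_filter] at hm
    exact absurd (honly m hm.1 hm.2) hne
  · intro hm₀
    have hcoeff : coeff m₀ f = 0 := by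
      by_contra hne
      exact hm₀ (mem_filter.2 ⟨mem_support_iff.2 hne, Finsupp.support_sum_single_one D⟩)
    rw [hcoeff, map_zero]

end InclusionExclusion

section Clonoid

variable {p : ℕ} {K : Set (MvPolynomial ℕ (ZMod p))}

lemma X_mem_linPoly (i : ℕ) : (X i : MvPolynomial ℕ (ZMod p)) ∈ LinPoly p :=
  ⟨{i}, fun _ => 1, by simp⟩

lemma zero_mem_linPoly : (0 : MvPolynomial ℕ (ZMod p)) ∈ LinPoly p :=
  ⟨∅, fun _ => 0, by simp⟩

lemma IsPLC.aeval_linPoly_mem (hK : IsPLC p K) {l : MvPolynomial ℕ (ZMod p)}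
    (hl : l ∈ LinPoly p) {g : ℕ → MvPolynomial ℕ (ZMod p)} (hg : ∀ i, g i ∈ K) :
    aeval g l ∈ K := by
  obtain ⟨n, hn⟩ := l.vars.exists_nat_subset_range
  exact hK.2.1 ⟨n, l, g, hl, fun i hi => mem_range.1 (hn hi), fun i _ => hg i, rfl⟩

lemma IsPLC.aeval_mem (hK : IsPLC p K) {f : MvPolynomial ℕ (ZMod p)} (hf : f ∈ K)
    {g : ℕ → MvPolynomial ℕ (ZMod p)} (hg : ∀ i, g i ∈ LinPoly p) : aeval g f ∈ K := by
  obtain ⟨n, hn⟩ := f.vars.exists_nat_subset_range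
  exact hK.2.2 ⟨n, f, g, hf, fun i hi => mem_range.1 (hn hi), fun i _ => hg i, rfl⟩

lemma IsPLC.zero_mem (hK : IsPLC p K) : 0 ∈ K := by
  obtain ⟨f, hf⟩ := hK.1
  simpa using hK.aeval_linPoly_mem zero_mem_linPoly fun _ => hf

lemma IsPLC.add_mem (hK : IsPLC p K) {f g : MvPolynomial ℕ (ZMod p)} (hf : f ∈ K)
    (hg : g ∈ K) : f + g ∈ K := by
  have hl : X 0 + X 1 ∈ LinPoly p := ⟨{0, 1}, fun _ => 1, by simp⟩
  simpa using hK.aeval_linPoly_mem hl (g := fun i => if i = 0 then f else g)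
    fun i => by split_ifs <;> assumption

lemma IsPLC.smul_mem (hK : IsPLC p K) (c : ZMod p) {f : MvPolynomial ℕ (ZMod p)}
    (hf : f ∈ K) : c • f ∈ K := by
  have hl : C c * X 0 ∈ LinPoly p := ⟨{0}, fun _ => c, by simp⟩
  simpa [smul_eq_C_mul] using hK.aeval_linPoly_mem hl fun _ => hf

lemma IsPLC.sum_mem (hK : IsPLC p K) {ι : Type*} {s : Finset ι}
    {f : ι → MvPolynomial ℕ (ZMod p)} (hf : ∀ i ∈ s, f i ∈ K) : ∑ i ∈ s, f i ∈ K :=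
  sum_induction f (· ∈ K) (fun _ _ => hK.add_mem) hK.zero_mem hf

lemma IsPLC.restrictTo_mem (hK : IsPLC p K) {f : MvPolynomial ℕ (ZMod p)} (hf : f ∈ K)
    (S : Finset ℕ) : restrictTo S f ∈ K :=
  hK.aeval_mem hf fun i => by
    split_ifs
    exacts [X_mem_linPoly i, zero_mem_linPoly]

end Clonoid

theorem statement9_general (p : ℕ) (d : ℕ)
    (g : MvPolynomial ℕ (ZMod p))
    (hdeg : ∀ m ∈ g.support, (m.sum fun _ e => e) ≤ d)
    (hnot : MvPolynomial.coeff (∑ i ∈ Finset.range d, Finsupp.single i 1) g = 0) :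
    (∏ i ∈ Finset.range d, MvPolynomial.X i) ∈
      genPLC p {(∏ i ∈ Finset.range d, MvPolynomial.X i : MvPolynomial ℕ (ZMod p)) + g} := by
  set m₀ : ℕ →₀ ℕ := ∑ i ∈ range d, Finsupp.single i 1
  have hprod : (∏ i ∈ range d, X i : MvPolynomial ℕ (ZMod p)) = monomial m₀ 1 :=
    (monomial_sum_one _ _).symm
  have hdegree : (monomial m₀ 1 + g).totalDegree ≤ #(range d) := by
    refine (totalDegree_add _ _).trans (max_le ?_ ?_)
    · exact (totalDegree_monomial_le _ _).trans (Finsupp.degree_sum_single_one _).le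
    · exact (Finset.sup_le hdeg).trans (card_range d).ge
  have hcoeff : coeff m₀ (monomial m₀ 1 + g) = 1 := by
    rw [coeff_add, coeff_monomial, if_pos rfl, hnot, add_zero]
  have hsum := sum_powerset_neg_one_pow_smul_restrictTo_of_totalDegree_le hdegree
  rw [hcoeff] at hsum
  rintro K ⟨hK, hgen⟩
  rw [hprod] at hgen ⊢
  rw [← hsum]
  exact hK.sum_mem fun S _ => hK.smul_mem _ (hK.restrictTo_mem (hgen rfl) S)

/-- Let `d ≥ 1` and let `g` be a polynomial all of whose monomials have
total degree at most `d` such that the monomial `x₀x₁⋯x_{d-1}` does not occur in `g`.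
Then `x₀x₁⋯x_{d-1}` belongs to the polynomial linearly closed clonoid generated by
`{x₀x₁⋯x_{d-1} + g}`. -/
theorem statement9 (p : ℕ) (hp : p.Prime) (d : ℕ) (hd : 0 < d)
    (g : MvPolynomial ℕ (ZMod p))
    (hdeg : ∀ m ∈ g.support, (m.sum fun _ e => e) ≤ d)
    (hnot : MvPolynomial.coeff (∑ i ∈ Finset.range d, Finsupp.single i 1) g = 0) :
    (∏ i ∈ Finset.range d, MvPolynomial.X i) ∈
      genPLC p {(∏ i ∈ Finset.range d, MvPolynomial.X i : MvPolynomial ℕ (ZMod p)) + g} :=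
  statement9_general p d g hdeg hnot
end

section
/- Let p be a prime and let C be a linearly closed clonoid on Z_p. Then there exists a subset T of P := {x_1x_2⋯x_i : i ∈ ℕ} ∪ {1} such that C is the linearly closed clonoid on Z_p generated by the operations induced by the polynomials in T (each f ∈ T taken in arity max(1, largest index of a variable occurring in f)). -/
/-! Every function `Z_p^n → Z_p` is a unique linear combination of reduced monomials `x^e`
(`e_i < p`), and the coefficient of `x^e` in `f` is a fixed linear combination of the
rescalings `x ↦ f(a₁x₁, …, aₙxₙ)` (Vandermonde duality). So a linearly closed clonoid `C` is
spanned by the monomials it contains. Substituting `xᵢ ↦ xᵢ + y` into `x^e ∈ C` and extracting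
the coefficient `eᵢ ≢ 0 (mod p)` of `xᵢ^{eᵢ-1} y` shows that `C` contains the multilinear
monomial of the same degree, and conversely identifying variables of `x₁⋯x_d` gives back
every `x^e` of degree `d`. Hence `C` is generated by the products `x₁⋯x_d` it contains. -/

open Finset Function

section LinearClosure

variable {p : ℕ} {C : Set (Ops (ZMod p))}

theorem Ops.mem_of_forall_eq {n : ℕ} {f g : (Fin (n + 1) → ZMod p) → ZMod p}
    (hf : (⟨n, f⟩ : Ops (ZMod p)) ∈ C) (hfg : ∀ x, f x = g x) :
    (⟨n, g⟩ : Ops (ZMod p)) ∈ C := by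
  rwa [← funext hfg]

namespace IsLCC

variable (hC : IsLCC p C)
include hC

theorem comp_linearMap_mem {n m : ℕ} {f : (Fin (n + 1) → ZMod p) → ZMod p}
    (hf : (⟨n, f⟩ : Ops (ZMod p)) ∈ C)
    (L : (Fin (m + 1) → ZMod p) →ₗ[ZMod p] (Fin (n + 1) → ZMod p)) :
    (⟨m, f ∘ L⟩ : Ops (ZMod p)) ∈ C := by
  refine hC.2.2 ⟨n, m, f, fun i x => L x i, hf, fun i =>
    ⟨m, fun j => L (fun k => if j = k then 1 else 0) i, ?_⟩, rfl⟩
  refine Sigma.ext rfl (heq_of_eq (funext fun x => ?_))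
  change L x i = _
  rw [L.pi_apply_eq_sum_univ x]
  simp [mul_comm]

theorem linComb_mem {k m : ℕ} (a : Fin (k + 1) → ZMod p)
    {g : Fin (k + 1) → (Fin (m + 1) → ZMod p) → ZMod p}
    (hg : ∀ i, (⟨m, g i⟩ : Ops (ZMod p)) ∈ C) :
    (⟨m, fun x => ∑ i, a i * g i x⟩ : Ops (ZMod p)) ∈ C :=
  hC.2.1 ⟨k, m, fun y => ∑ i, a i * y i, g, ⟨k, a, rfl⟩, hg, rfl⟩

theorem smul_mem {n : ℕ} (c : ZMod p) {f : (Fin (n + 1) → ZMod p) → ZMod p}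
    (hf : (⟨n, f⟩ : Ops (ZMod p)) ∈ C) :
    (⟨n, fun x => c * f x⟩ : Ops (ZMod p)) ∈ C :=
  Ops.mem_of_forall_eq (hC.linComb_mem (fun _ : Fin 1 => c) fun _ => hf) (by simp)

theorem add_mem {n : ℕ} {f g : (Fin (n + 1) → ZMod p) → ZMod p}
    (hf : (⟨n, f⟩ : Ops (ZMod p)) ∈ C) (hg : (⟨n, g⟩ : Ops (ZMod p)) ∈ C) :
    (⟨n, fun x => f x + g x⟩ : Ops (ZMod p)) ∈ C :=
  Ops.mem_of_forall_eq
    (hC.linComb_mem (fun _ => 1) (g := ![f, g]) fun i => by fin_cases i <;> simpa)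
    (by simp [Fin.sum_univ_two])

theorem zero_mem (n : ℕ) : (⟨n, fun _ => (0 : ZMod p)⟩ : Ops (ZMod p)) ∈ C := by
  obtain ⟨⟨m, g⟩, hg⟩ := hC.1
  have hzero : (⟨m, fun _ => (0 : ZMod p)⟩ : Ops (ZMod p)) ∈ C :=
    Ops.mem_of_forall_eq (hC.smul_mem 0 hg) (by simp)
  exact hC.comp_linearMap_mem hzero 0

theorem sum_mem {n : ℕ} {ι : Type*} (s : Finset ι) {g : ι → (Fin (n + 1) → ZMod p) → ZMod p}
    (hg : ∀ i ∈ s, (⟨n, g i⟩ : Ops (ZMod p)) ∈ C) :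
    (⟨n, fun x => ∑ i ∈ s, g i x⟩ : Ops (ZMod p)) ∈ C := by
  classical
  induction s using Finset.induction with
  | empty => simpa using hC.zero_mem n
  | insert a s ha ih =>
    simpa only [Finset.sum_insert ha] using
      hC.add_mem (hg a (mem_insert_self a s)) (ih fun i hi => hg i (mem_insert_of_mem hi))

end IsLCC

theorem genLC_isLCC (F : Set (Ops (ZMod p))) : IsLCC p (genLC p F) := by
  refine ⟨⟨⟨0, fun _ => 0⟩, fun D hD => hD.1.zero_mem 0⟩, ?_, ?_⟩
  · rintro x ⟨n, m, f, g, hf, hg, rfl⟩ D hD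
    exact hD.1.2.1 ⟨n, m, f, g, hf, fun i => hg i D hD, rfl⟩
  · rintro x ⟨n, m, f, g, hf, hg, rfl⟩ D hD
    exact hD.1.2.2 ⟨n, m, f, g, hf D hD, hg, rfl⟩

theorem subset_genLC (F : Set (Ops (ZMod p))) : F ⊆ genLC p F :=
  fun _ hx _ hD => hD.2 hx

theorem genLC_subset {F : Set (Ops (ZMod p))} (hC : IsLCC p C) (hF : F ⊆ C) : genLC p F ⊆ C :=
  Set.sInter_subset_of_mem ⟨hC, hF⟩

end LinearClosure

theorem sum_pi_prod_eq_ite {ι α β R : Type*} [Fintype ι] [DecidableEq ι] [Fintype α]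
    [DecidableEq α] [DecidableEq β] [CommSemiring R] (g : β → β → α → R)
    (hg : ∀ b c, ∑ a, g b c a = if b = c then 1 else 0) (u v : ι → β) :
    ∑ a : ι → α, ∏ i, g (u i) (v i) (a i) = if u = v then 1 else 0 := by
  rw [← Fintype.piFinset_univ, ← prod_univ_sum]
  simp only [hg, Fintype.prod_boole, funext_iff]

namespace Clonoid

variable {p m : ℕ}

def mon (e : Fin m → Fin p) (x : Fin m → ZMod p) : ZMod p := ∏ i, x i ^ (e i : ℕ)

section Interpolation

variable [Fact p.Prime]

noncomputable def powDual (b : Fin p) (a : ZMod p) : ZMod p :=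
  (Matrix.vandermonde (ZMod.finEquiv p))⁻¹ b ((ZMod.finEquiv p).symm a)

theorem isUnit_det_vandermonde_finEquiv :
    IsUnit (Matrix.vandermonde (ZMod.finEquiv p)).det :=
  isUnit_iff_ne_zero.mpr (Matrix.det_vandermonde_ne_zero_iff.mpr (ZMod.finEquiv p).injective)

theorem sum_powDual_mul_pow (b c : Fin p) :
    ∑ a : ZMod p, powDual b a * a ^ (c : ℕ) = if b = c then 1 else 0 := by
  rw [← (ZMod.finEquiv p).toEquiv.sum_comp, ← Matrix.one_apply,
    ← Matrix.nonsing_inv_mul _ isUnit_det_vandermonde_finEquiv, Matrix.mul_apply]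
  simp [powDual, Matrix.vandermonde_apply]

theorem sum_powDual_mul_pow' (x a : ZMod p) :
    ∑ b : Fin p, powDual b a * x ^ (b : ℕ) = if x = a then 1 else 0 := by
  obtain ⟨i, rfl⟩ := (ZMod.finEquiv p).surjective x
  obtain ⟨j, rfl⟩ := (ZMod.finEquiv p).surjective a
  simp only [(ZMod.finEquiv p).injective.eq_iff]
  rw [← Matrix.one_apply,
    ← Matrix.mul_nonsing_inv _ isUnit_det_vandermonde_finEquiv, Matrix.mul_apply]
  simp [powDual, Matrix.vandermonde_apply, mul_comm]

noncomputable def monDual (e : Fin m → Fin p) (a : Fin m → ZMod p) : ZMod p :=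
  ∏ i, powDual (e i) (a i)

theorem sum_monDual_mul_mon (e e' : Fin m → Fin p) :
    ∑ a, monDual e a * mon e' a = if e = e' then 1 else 0 := by
  simp only [monDual, mon, ← prod_mul_distrib]
  exact sum_pi_prod_eq_ite (fun (b c : Fin p) (a : ZMod p) => powDual b a * a ^ (c : ℕ))
    sum_powDual_mul_pow e e'

theorem sum_monDual_mul_mon' (x a : Fin m → ZMod p) :
    ∑ e, monDual e a * mon e x = if x = a then 1 else 0 := by
  simp only [monDual, mon, ← prod_mul_distrib]
  exact sum_pi_prod_eq_ite (fun (x a : ZMod p) (b : Fin p) => powDual b a * x ^ (b : ℕ))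
    sum_powDual_mul_pow' x a

noncomputable def coeff (h : (Fin m → ZMod p) → ZMod p) (e : Fin m → Fin p) : ZMod p :=
  ∑ a, monDual e a * h a

theorem eq_sum_coeff_mul_mon (h : (Fin m → ZMod p) → ZMod p) (x : Fin m → ZMod p) :
    h x = ∑ e, coeff h e * mon e x := by
  simp only [coeff, sum_mul]
  rw [sum_comm]
  simp_rw [mul_right_comm _ (h _), ← sum_mul, sum_monDual_mul_mon']
  simp

theorem coeff_sum_mul_mon {ι : Type*} (s : Finset ι) (b : ι → ZMod p) {E : ι → Fin m → Fin p}
    (hE : Injective E) {k : ι} (hk : k ∈ s) :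
    coeff (fun x => ∑ j ∈ s, b j * mon (E j) x) (E k) = b k := by
  calc coeff (fun x => ∑ j ∈ s, b j * mon (E j) x) (E k)
      = ∑ j ∈ s, b j * ∑ a, monDual (E k) a * mon (E j) a := by
        simp only [coeff, mul_sum]
        rw [sum_comm]
        exact sum_congr rfl fun j _ => sum_congr rfl fun a _ => by ring
    _ = b k := by
        classical
        simp only [sum_monDual_mul_mon, mul_ite, mul_one, mul_zero, hE.eq_iff]
        rw [sum_ite_eq, if_pos hk]

theorem sum_monDual_mul_apply_mul (h : (Fin m → ZMod p) → ZMod p) (e : Fin m → Fin p)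
    (x : Fin m → ZMod p) :
    ∑ a, monDual e a * h (fun i => a i * x i) = coeff h e * mon e x := by
  have hmon : ∀ (e' : Fin m → Fin p) a, mon e' (fun i => a i * x i) = mon e' a * mon e' x :=
    fun e' a => by simp only [mon, mul_pow, prod_mul_distrib]
  simp_rw [eq_sum_coeff_mul_mon h (fun i => _ * x i), hmon, mul_sum]
  rw [sum_comm]
  simp_rw [fun e' a => show monDual e a * (coeff h e' * (mon e' a * mon e' x)) =
    coeff h e' * mon e' x * (monDual e a * mon e' a) by ring, ← mul_sum, sum_monDual_mul_mon]
  simp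

end Interpolation

section Exponents

def deg (e : Fin m → Fin p) : ℕ := ∑ i, (e i : ℕ)

def excess (e : Fin m → Fin p) : ℕ := ∑ i, ((e i : ℕ) - 1)

def prodOp (p : ℕ) : ℕ → Ops (ZMod p)
  | 0 => ⟨0, fun _ => 1⟩
  | k + 1 => ⟨k, fun x => ∏ j, x j⟩

theorem mon_eq_one_of_deg_eq_zero {e : Fin m → Fin p} (hd : deg e = 0)
    (x : Fin m → ZMod p) : mon e x = 1 := by
  have he : ∀ i, (e i : ℕ) = 0 := fun i => sum_eq_zero_iff.mp hd i (mem_univ i)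
  simp [mon, he]

theorem mon_eq_prod_sigma {k : ℕ} (e : Fin m → Fin p) (σ : (Σ i, Fin (e i : ℕ)) ≃ Fin (k + 1))
    (x : Fin m → ZMod p) : mon e x = ∏ j, x (σ.symm j).1 := by
  rw [Equiv.prod_comp σ.symm (fun s => x s.1), ← univ_sigma_univ, prod_sigma]
  simp [mon]

theorem mon_eq_mul_prod_erase (e : Fin m → Fin p) (x : Fin m → ZMod p) (i : Fin m) :
    mon e x = x i ^ (e i : ℕ) * ∏ j ∈ univ.erase i, x j ^ (e j : ℕ) :=
  (mul_prod_erase _ _ (mem_univ i)).symm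

theorem mon_update_apply (e : Fin m → Fin p) (x : Fin m → ZMod p) (i : Fin m)
    (w : ZMod p) : mon e (update x i w) = w ^ (e i : ℕ) * ∏ j ∈ univ.erase i, x j ^ (e j : ℕ) := by
  rw [mon_eq_mul_prod_erase _ _ i, update_self]
  exact congrArg _ (prod_congr rfl fun j hj => by rw [update_of_ne (ne_of_mem_erase hj)])

theorem mon_update (e : Fin m → Fin p) (x : Fin m → ZMod p) (i : Fin m) (c : Fin p) :
    mon (update e i c) x = x i ^ (c : ℕ) * ∏ j ∈ univ.erase i, x j ^ (e j : ℕ) := by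
  rw [mon_eq_mul_prod_erase _ _ i, update_self]
  exact congrArg _ (prod_congr rfl fun j hj => by rw [update_of_ne (ne_of_mem_erase hj)])

theorem mon_snoc (e : Fin m → Fin p) (c : Fin p) (y : Fin (m + 1) → ZMod p) :
    mon (Fin.snoc (α := fun _ => Fin p) e c) y
      = mon e (fun i => y i.castSucc) * y (Fin.last m) ^ (c : ℕ) := by
  simp [mon, Fin.prod_univ_castSucc]

/-- The exponent of `x^e` with the factor `xᵢ^{eᵢ}` replaced by `xᵢ^{eᵢ-k} y^k`, where `y` is
a new last variable. -/
def polarExp {n : ℕ} (e : Fin (n + 1) → Fin p) (i : Fin (n + 1)) (k : Fin ((e i : ℕ) + 1)) :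
    Fin (n + 2) → Fin p :=
  Fin.snoc (α := fun _ => Fin p)
    (update e i ⟨(e i : ℕ) - k, lt_of_le_of_lt (Nat.sub_le _ _) (e i).isLt⟩)
    ⟨k, lt_of_le_of_lt (Nat.lt_succ_iff.mp k.isLt) (e i).isLt⟩

noncomputable def polarize {n : ℕ} (i : Fin (n + 1)) :
    (Fin (n + 2) → ZMod p) →ₗ[ZMod p] (Fin (n + 1) → ZMod p) :=
  LinearMap.funLeft _ _ Fin.castSucc + (LinearMap.proj (Fin.last (n + 1))).smulRight (Pi.single i 1)

theorem polarize_apply {n : ℕ} (i : Fin (n + 1)) (y : Fin (n + 2) → ZMod p) :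
    polarize i y = update (fun j => y j.castSucc) i (y i.castSucc + y (Fin.last _)) := by
  funext j
  by_cases hj : j = i <;> simp [polarize, hj]

theorem mon_polarize {n : ℕ} (e : Fin (n + 1) → Fin p) (i : Fin (n + 1))
    (y : Fin (n + 2) → ZMod p) :
    mon e (polarize i y)
      = ∑ k : Fin ((e i : ℕ) + 1), ((e i : ℕ).choose k : ZMod p) * mon (polarExp e i k) y := by
  have hterm : ∀ k, mon (polarExp e i k) y = y i.castSucc ^ ((e i : ℕ) - k)
      * (∏ j ∈ univ.erase i, y j.castSucc ^ (e j : ℕ)) * y (Fin.last _) ^ (k : ℕ) := by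
    intro k
    rw [polarExp, mon_snoc, mon_update]
  rw [polarize_apply, mon_update_apply, add_comm, add_pow, sum_mul, ← Fin.sum_univ_eq_sum_range]
  exact sum_congr rfl fun k _ => by rw [hterm]; ring

theorem sum_polarExp (φ : ℕ → ℕ) {n : ℕ} (e : Fin (n + 1) → Fin p) (i : Fin (n + 1))
    (k : Fin ((e i : ℕ) + 1)) :
    ∑ j, φ (polarExp e i k j) + φ (e i) = ∑ j, φ (e j) + φ ((e i : ℕ) - k) + φ k := by
  have hupdate : ∀ c : Fin p,
      ∑ j, φ (update e i c j) = φ c + ∑ j ∈ univ.erase i, φ (e j) := fun c => by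
    rw [← sdiff_singleton_eq_erase, ← sum_update_of_mem (mem_univ i)]
    exact sum_congr rfl fun j _ => by by_cases hj : j = i <;> simp [hj]
  rw [Fin.sum_univ_castSucc, ← add_sum_erase univ (fun j => φ (e j)) (mem_univ i)]
  simp only [polarExp, Fin.snoc_castSucc, Fin.snoc_last, hupdate]
  ring

end Exponents

end Clonoid

namespace IsLCC

open Clonoid

variable {p : ℕ} {C : Set (Ops (ZMod p))} (hC : IsLCC p C)
include hC

theorem mon_mem_of_prodOp_deg_mem {n : ℕ} {e : Fin (n + 1) → Fin p}
    (h : prodOp p (deg e) ∈ C) : (⟨n, mon e⟩ : Ops (ZMod p)) ∈ C := by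
  cases hd : deg e with
  | zero =>
    rw [hd] at h
    exact Ops.mem_of_forall_eq (hC.comp_linearMap_mem h 0)
      fun x => (mon_eq_one_of_deg_eq_zero hd x).symm
  | succ k =>
    rw [hd] at h
    let σ : (Σ i, Fin (e i : ℕ)) ≃ Fin (k + 1) := Fintype.equivFinOfCardEq (by simp [← hd, deg])
    exact Ops.mem_of_forall_eq
      (hC.comp_linearMap_mem h (LinearMap.funLeft _ _ fun j => (σ.symm j).1))
      fun x => (mon_eq_prod_sigma e σ x).symm

theorem prodOp_deg_mem_of_le_one {n : ℕ} {e : Fin (n + 1) → Fin p}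
    (hm : (⟨n, mon e⟩ : Ops (ZMod p)) ∈ C) (he : ∀ i, (e i : ℕ) ≤ 1) : prodOp p (deg e) ∈ C := by
  cases hd : deg e with
  | zero =>
    exact Ops.mem_of_forall_eq (hC.comp_linearMap_mem hm 0)
      fun x => mon_eq_one_of_deg_eq_zero hd _
  | succ k =>
    let σ : (Σ i, Fin (e i : ℕ)) ≃ Fin (k + 1) := Fintype.equivFinOfCardEq (by simp [← hd, deg])
    let τ : Fin (n + 1) → Fin (k + 1) := fun i => if h : 0 < (e i : ℕ) then σ ⟨i, ⟨0, h⟩⟩ else 0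
    have hτ : ∀ s, τ s.1 = σ s := by
      rintro ⟨i, j⟩
      have := he i
      have := j.isLt
      simp only [τ, dif_pos j.pos]
      rw [show (⟨0, j.pos⟩ : Fin (e i : ℕ)) = j from Fin.ext (by change 0 = (j : ℕ); omega)]
    refine Ops.mem_of_forall_eq (hC.comp_linearMap_mem hm (LinearMap.funLeft _ _ τ)) fun y => ?_
    simp [mon_eq_prod_sigma e σ, hτ]

variable [Fact p.Prime]

theorem mon_mem_of_coeff_ne_zero {n : ℕ} {h : (Fin (n + 1) → ZMod p) → ZMod p}
    (hh : (⟨n, h⟩ : Ops (ZMod p)) ∈ C) {e : Fin (n + 1) → Fin p} (he : coeff h e ≠ 0) :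
    (⟨n, mon e⟩ : Ops (ZMod p)) ∈ C := by
  have hscaled : ∀ a : Fin (n + 1) → ZMod p,
      (⟨n, fun x => monDual e a * h (fun i => a i * x i)⟩ : Ops (ZMod p)) ∈ C :=
    fun a => hC.smul_mem _ (Ops.mem_of_forall_eq
      (hC.comp_linearMap_mem hh (Matrix.diagonal a).mulVecLin) fun x => by
        simp only [comp_apply, Matrix.mulVecLin_apply]
        congr 1
        exact funext (Matrix.mulVec_diagonal a x))
  have hcoeff := Ops.mem_of_forall_eq (hC.sum_mem univ fun a _ => hscaled a)
    (sum_monDual_mul_apply_mul h e)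
  exact Ops.mem_of_forall_eq (hC.smul_mem (coeff h e)⁻¹ hcoeff) fun x => inv_mul_cancel_left₀ he _

theorem mem_of_forall_mon_mem {n : ℕ} (h : (Fin (n + 1) → ZMod p) → ZMod p)
    (hmon : ∀ e, coeff h e ≠ 0 → (⟨n, mon e⟩ : Ops (ZMod p)) ∈ C) :
    (⟨n, h⟩ : Ops (ZMod p)) ∈ C := by
  refine Ops.mem_of_forall_eq (hC.sum_mem univ fun e _ => ?_)
    fun x => (eq_sum_coeff_mul_mon h x).symm
  by_cases he : coeff h e = 0
  · simpa [he] using hC.zero_mem n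
  · exact hC.smul_mem _ (hmon e he)

theorem exists_excess_lt_mem {n : ℕ} {e : Fin (n + 1) → Fin p}
    (hm : (⟨n, mon e⟩ : Ops (ZMod p)) ∈ C) {i : Fin (n + 1)} (hi : 2 ≤ (e i : ℕ)) :
    ∃ e' : Fin (n + 2) → Fin p, deg e' = deg e ∧ excess e' < excess e ∧
      (⟨n + 1, mon e'⟩ : Ops (ZMod p)) ∈ C := by
  have hpol := Ops.mem_of_forall_eq (hC.comp_linearMap_mem hm (polarize i)) (mon_polarize e i)
  let one : Fin ((e i : ℕ) + 1) := ⟨1, by omega⟩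
  have hinj : Injective (polarExp e i) := fun k k' hkk' => Fin.ext <| by
    simpa [polarExp] using congrArg (fun f => (f (Fin.last _) : ℕ)) hkk'
  have hone : (one : ℕ) = 1 := rfl
  -- `0 < eᵢ < p`, so the binomial coefficient `eᵢ choose 1` survives in `ZMod p`
  have hunit : (((e i : ℕ).choose one : ℕ) : ZMod p) ≠ 0 := by
    rw [hone, Nat.choose_one_right, Ne, ZMod.natCast_eq_zero_iff]
    exact fun hdvd => (Nat.le_of_dvd (by omega) hdvd).not_gt (e i).isLt
  refine ⟨polarExp e i one, ?_, ?_, hC.mon_mem_of_coeff_ne_zero hpol ?_⟩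
  · have := sum_polarExp id e i one
    simp only [id, hone] at this
    unfold deg
    omega
  · have := sum_polarExp (· - 1) e i one
    simp only [hone] at this
    unfold excess
    omega
  · rwa [coeff_sum_mul_mon univ _ hinj (mem_univ one)]

theorem prodOp_deg_mem {n : ℕ} {e : Fin (n + 1) → Fin p}
    (hm : (⟨n, mon e⟩ : Ops (ZMod p)) ∈ C) : prodOp p (deg e) ∈ C := by
  induction hN : excess e using Nat.strong_induction_on generalizing n e with
  | _ N ih =>
    by_cases hle : ∀ i, (e i : ℕ) ≤ 1
    · exact hC.prodOp_deg_mem_of_le_one hm hle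
    · obtain ⟨i, hi⟩ := not_forall.mp hle
      obtain ⟨e', hdeg, hlt, hm'⟩ := hC.exists_excess_lt_mem hm (not_le.mp hi)
      exact hdeg ▸ ih _ (hN ▸ hlt) hm' rfl

end IsLCC

theorem inducedOp_prod_range (p k : ℕ) :
    inducedOp p k (∏ i ∈ range (k + 1), MvPolynomial.X i) = fun x => ∏ j : Fin (k + 1), x j := by
  funext x
  rw [inducedOp, map_prod, ← Fin.prod_univ_eq_prod_range]
  simp [Fin.is_le]

open Clonoid in
theorem generators_eq_image_prodOp (p : ℕ) (I : Set ℕ) :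
    ({ h | 0 ∈ I ∧ h = ⟨0, fun _ => (1 : ZMod p)⟩ } ∪
      { h | ∃ k : ℕ, k + 1 ∈ I ∧
        h = ⟨k, inducedOp p k (∏ i ∈ range (k + 1), MvPolynomial.X i)⟩ }) = prodOp p '' I := by
  ext h
  simp only [inducedOp_prod_range, Set.mem_union, Set.mem_ofPred_eq, Set.mem_image]
  constructor
  · rintro (⟨h0, rfl⟩ | ⟨k, hk, rfl⟩)
    exacts [⟨0, h0, rfl⟩, ⟨k + 1, hk, rfl⟩]
  · rintro ⟨_ | k, hd, rfl⟩
    exacts [Or.inl ⟨hd, rfl⟩, Or.inr ⟨k, hd, rfl⟩]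

/-- Every linearly closed clonoid on `ZMod p` is generated by the
operations induced by a subset of `{1} ∪ {x₀x₁⋯x_{k} : k ∈ ℕ}`, each taken in its minimal
arity. Here `I` encodes the choice: `0 ∈ I` means the constant `1` (as a unary operation)
is a generator, and `k + 1 ∈ I` means the product `x₀⋯x_k` (as a `(k+1)`-ary operation)
is a generator. -/
theorem statement11 (p : ℕ) (hp : p.Prime) (C : Set (Ops (ZMod p))) (hC : IsLCC p C) :
    ∃ I : Set ℕ,
      C = genLC p
        ({ h | 0 ∈ I ∧ h = ⟨0, fun _ => (1 : ZMod p)⟩ } ∪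
         { h | ∃ k : ℕ, k + 1 ∈ I ∧
            h = ⟨k, inducedOp p k (∏ i ∈ Finset.range (k + 1), MvPolynomial.X i)⟩ }) := by
  have : Fact p.Prime := ⟨hp⟩
  refine ⟨{d | Clonoid.prodOp p d ∈ C}, ?_⟩
  rw [generators_eq_image_prodOp]
  refine (genLC_subset hC (Set.image_subset_iff.mpr fun _ hd => hd)).antisymm' ?_
  rintro ⟨n, h⟩ hh
  have hG := genLC_isLCC (Clonoid.prodOp p '' {d | Clonoid.prodOp p d ∈ C})
  exact hG.mem_of_forall_mon_mem h fun e he => hG.mon_mem_of_prodOp_deg_mem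
    (subset_genLC _ ⟨_, hC.prodOp_deg_mem (hC.mon_mem_of_coeff_ne_zero hh he), rfl⟩)
end
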